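/- arXiv:2502.06290 — 2 statements merged into one kernel-verified Lean document; each statement's English description precedes it below -/
import Mathlib

section
/- Let n ≥ 2 and let f ∈ ℂ[x₀,…,xₙ] be homogeneous of degree d such that the hypersurface V = V(f) ⊆ ℙⁿ has only isolated singularities (the set of points of ℙⁿ at which all partial derivatives ∂₀f,…,∂ₙf vanish is finite). Suppose p = (1:0:⋯:0) is a singular point of V, i.e. (∂ᵢf)(1,0,…,0) = 0 for all i = 0,…,n. Set g(y₁,…,yₙ) = f(1,y₁,…,yₙ) and gⱼ = ∂g/∂yⱼ. Then the following are equivalent: (i) g belongs to the ideal generated by g₁,…,gₙ in the localization of ℂ[y₁,…,yₙ] at the maximal ideal (y₁,…,yₙ) (equivalently, there exists u ∈ ℂ[y₁,…,yₙ] with u(0) ≠ 0 and u·g ∈ (g₁,…,gₙ)); (ii) there exist a tuple (A₀,…,Aₙ) ∈ R^{n+1} with A₀∂₀f + ⋯ + Aₙ∂ₙf = 0 and an index k ∈ {0,…,n} with Aₖ(1,0,…,0) ≠ 0. -/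
open MvPolynomial

noncomputable section

/-- Dehomogenization with respect to `x₀`: substitute `x₀ = 1`, `xᵢ = yᵢ`. -/
def deh (n : ℕ) : MvPolynomial (Fin (n + 1)) ℂ →ₐ[ℂ] MvPolynomial (Fin n) ℂ :=
  aeval (fun i => Fin.cases 1 (fun j => X j) i)

/-- The point `(1:0:⋯:0)`. -/
def pt (n : ℕ) : Fin (n + 1) → ℂ := fun i => if i = 0 then 1 else 0

/-- Saito's local condition at the origin: `g` lies in the ideal generated by its partial
derivatives in the localization of `ℂ[y₁,…,yₙ]` at the maximal ideal `(y₁,…,yₙ)`;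
equivalently, `u·g ∈ (g₁,…,gₙ)` for some polynomial `u` with `u(0) ≠ 0`. -/
def SaitoQH {n : ℕ} (g : MvPolynomial (Fin n) ℂ) : Prop :=
  ∃ u : MvPolynomial (Fin n) ℂ, eval (0 : Fin n → ℂ) u ≠ 0 ∧
    u * g ∈ Ideal.span (Set.range fun j : Fin n => pderiv j g)

/-!
(i) ⇒ (ii): homogenizing a relation `u·g = ∑ bⱼ gⱼ` gives `U·f = ∑ Bⱼ ∂ⱼf`, and together with
Euler's identity `∑ xᵢ ∂ᵢf = d·f` this yields the syzygy `(U x₀, U x₁ - d B₁, …, U xₙ - d Bₙ)`,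
whose first entry takes the value `u(0) ≠ 0` at `p`.

(ii) ⇒ (i): dehomogenizing a syzygy `A` gives the vector field `w = ∑ (a₀ yⱼ - aⱼ) ∂ⱼ` with
`w(g) = d a₀ g`, where `aᵢ = Aᵢ(1, y)`. If `a₀(0) ≠ 0` this is Saito's condition. The other
components always vanish at `p`: `w` preserves the Tjurina ideal `(g, g₁, …, gₙ)`, whose zero locus
is finite since `V` has isolated singularities, and a vector field tangent to a finite scheme
vanishes at its points: in characteristic zero the radical of a `w`-stable ideal is `w`-stable,
and by the Nullstellensatz `yⱼ s` lies in that radical when `s(0) = 1` and `s` vanishes at the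
other points of the zero locus, so `0 = w(yⱼ s)(0) = wⱼ(0)`.
-/

namespace Derivation

variable {R A : Type*} [CommRing R] [CommRing A] [Algebra R A] (D : Derivation R A A)

lemma mul_map_pow (x : A) (m : ℕ) : x * D (x ^ m) = m • (x ^ m * D x) := by
  rcases m with _ | m
  · simp
  · rw [leibniz_pow, Nat.add_sub_cancel]
    simp only [smul_eq_mul, nsmul_eq_mul]
    ring

variable [Algebra ℚ A] {I : Ideal A}

lemma pow_mul_map_pow_mem (hI : ∀ b ∈ I, D b ∈ I) {a : A} {q k : ℕ}
    (h : a ^ (q + 1) * D a ^ (2 * k) ∈ I) : a ^ q * D a ^ (2 * (k + 1)) ∈ I := by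
  have hexpand : ((q + 1 : ℕ) : A) * (a ^ q * D a ^ (2 * (k + 1))) =
      D a * D (a ^ (q + 1) * D a ^ (2 * k)) -
        (2 * k : ℕ) • D (D a) * (a ^ (q + 1) * D a ^ (2 * k)) := by
    have hpow := D.mul_map_pow (D a) (2 * k)
    rw [leibniz, D.leibniz_pow (a := a) (q + 1), Nat.add_sub_cancel]
    simp only [smul_eq_mul, nsmul_eq_mul] at hpow ⊢
    linear_combination (-a ^ (q + 1)) * hpow
  have hunit : IsUnit ((q + 1 : ℕ) : A) := by
    simpa using (Nat.cast_add_one_ne_zero (R := ℚ) q).isUnit.map (algebraMap ℚ A)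
  rw [← Ideal.unit_mul_mem_iff_mem I hunit, hexpand]
  exact I.sub_mem (I.mul_mem_left _ (hI _ h)) (I.mul_mem_left _ h)

theorem map_mem_radical (hI : ∀ b ∈ I, D b ∈ I) {a : A} (ha : a ∈ I.radical) :
    D a ∈ I.radical := by
  obtain ⟨m, hm⟩ := ha
  have key : ∀ k q, q + k = m → a ^ q * D a ^ (2 * k) ∈ I := by
    intro k
    induction k with
    | zero => rintro q rfl; simpa using hm
    | succ k ih => exact fun q hq => D.pow_mul_map_pow_mem hI (ih (q + 1) (by omega))
  exact ⟨2 * m, by simpa using key m 0 (zero_add m)⟩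

end Derivation

namespace MvPolynomial

lemma exists_eval_eq_one_forall_eval_eq_zero {k σ : Type*} [Field k] {Z : Set (σ → k)}
    (hZ : Z.Finite) {p : σ → k} (hp : p ∉ Z) :
    ∃ s : MvPolynomial σ k, eval p s = 1 ∧ ∀ z ∈ Z, eval z s = 0 := by
  induction Z, hZ using Set.Finite.induction_on with
  | empty => exact ⟨1, by simp, by simp⟩
  | @insert z Z _ _ ih =>
    obtain ⟨s, hs1, hs0⟩ := ih fun h => hp (Set.mem_insert_of_mem _ h)
    obtain ⟨i, hi⟩ : ∃ i, z i ≠ p i :=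
      Function.ne_iff.mp fun h => hp (h ▸ Set.mem_insert z Z)
    refine ⟨C (p i - z i)⁻¹ * (X i - C (z i)) * s, ?_, ?_⟩
    · simp [hs1, sub_ne_zero.mpr hi.symm]
    · rintro y (rfl | hy)
      · simp
      · simp [hs0 y hy]

section VectorField

variable {R σ : Type*} [CommRing R]

lemma pderiv_pderiv_comm (i j : σ) (p : MvPolynomial σ R) :
    pderiv i (pderiv j p) = pderiv j (pderiv i p) := by
  classical
  have h : ⁅pderiv i, pderiv j⁆ = (0 : Derivation R (MvPolynomial σ R) (MvPolynomial σ R)) :=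
    derivation_ext fun k => by
      rw [Derivation.commutator_apply]
      simp only [pderiv_X, Pi.single_apply]
      split_ifs <;> simp
  have hp := congr($h p)
  rwa [Derivation.commutator_apply, Derivation.zero_apply, sub_eq_zero] at hp

variable [Fintype σ]

def vectorField (w : σ → MvPolynomial σ R) :
    Derivation R (MvPolynomial σ R) (MvPolynomial σ R) :=
  ∑ i, w i • pderiv i

lemma vectorField_apply (w : σ → MvPolynomial σ R) (a : MvPolynomial σ R) :
    vectorField w a = ∑ i, w i * pderiv i a := by
  rw [vectorField, ← Derivation.coeFnAddMonoidHom_apply, map_sum]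
  simp

lemma vectorField_X (w : σ → MvPolynomial σ R) (i : σ) : vectorField w (X i) = w i := by
  classical
  simp [vectorField_apply, pderiv_X, Pi.single_apply]

lemma pderiv_vectorField (w : σ → MvPolynomial σ R) (j : σ) (a : MvPolynomial σ R) :
    pderiv j (vectorField w a) =
      vectorField w (pderiv j a) + ∑ i, pderiv j (w i) * pderiv i a := by
  simp only [vectorField_apply, map_sum, pderiv_mul, pderiv_pderiv_comm j,
    ← Finset.sum_add_distrib]
  exact Finset.sum_congr rfl fun i _ => by ring

def tjurinaIdeal (g : MvPolynomial σ R) : Ideal (MvPolynomial σ R) :=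
  Ideal.span (insert g (Set.range fun i => pderiv i g))

lemma vectorField_mem_tjurinaIdeal {w : σ → MvPolynomial σ R} {g h : MvPolynomial σ R}
    (hg : vectorField w g = h * g) {a : MvPolynomial σ R} (ha : a ∈ tjurinaIdeal g) :
    vectorField w a ∈ tjurinaIdeal g := by
  have hg_mem : g ∈ tjurinaIdeal g := Ideal.subset_span (Set.mem_insert _ _)
  have hpderiv_mem (i : σ) : pderiv i g ∈ tjurinaIdeal g :=
    Ideal.subset_span (Set.mem_insert_of_mem _ ⟨i, rfl⟩)
  induction ha using Submodule.span_induction with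
  | mem x hx =>
    obtain rfl | ⟨j, rfl⟩ := hx
    · exact hg ▸ Ideal.mul_mem_left _ _ hg_mem
    · rw [eq_sub_of_add_eq (pderiv_vectorField w j g).symm, hg, pderiv_mul]
      refine Ideal.sub_mem _ (Ideal.add_mem _ ?_ ?_) (Ideal.sum_mem _ fun i _ => ?_)
      · exact Ideal.mul_mem_left _ _ hg_mem
      · exact Ideal.mul_mem_left _ _ (hpderiv_mem j)
      · exact Ideal.mul_mem_left _ _ (hpderiv_mem i)
  | zero => simp
  | add x y _ _ hx hy => simpa using Ideal.add_mem _ hx hy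
  | smul c x hx hDx =>
    rw [smul_eq_mul, Derivation.leibniz, smul_eq_mul, smul_eq_mul]
    exact Ideal.add_mem _ (Ideal.mul_mem_left _ _ hDx) (Ideal.mul_mem_right _ _ hx)

end VectorField

theorem eval_derivation_X_eq_zero_of_finite_zeroLocus {k σ : Type*} [Field k] [IsAlgClosed k]
    [CharZero k] [Finite σ] (D : Derivation k (MvPolynomial σ k) (MvPolynomial σ k))
    {I : Ideal (MvPolynomial σ k)} (hI : ∀ a ∈ I, D a ∈ I) (hfin : (zeroLocus k I).Finite)
    {p : σ → k} (hp : p ∈ zeroLocus k I) (i : σ) : eval p (D (X i)) = 0 := by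
  obtain ⟨s, hs1, hs0⟩ := exists_eval_eq_one_forall_eval_eq_zero
    (hfin.sdiff (t := {p})) fun h => h.2 rfl
  have hvanish : (X i - C (p i)) * s ∈ I.radical := by
    rw [← vanishingIdeal_zeroLocus_eq_radical (K := k)]
    intro z hz
    by_cases hzp : z = p
    · simp [hzp]
    · simp [hs0 z ⟨hz, hzp⟩]
  have hD := radical_le_vanishingIdeal_zeroLocus (K := k) I (D.map_mem_radical hI hvanish) p hp
  simpa [Derivation.leibniz, hs1] using hD

lemma IsHomogeneous.eval_smul {R σ : Type*} [CommSemiring R]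
    {φ : MvPolynomial σ R} {m : ℕ} (hφ : φ.IsHomogeneous m) (a : R) (v : σ → R) :
    eval (a • v) φ = a ^ m * eval v φ := by
  simp only [eval_eq, Finset.mul_sum]
  refine Finset.sum_congr rfl fun s hs => ?_
  have hdeg : ∑ i ∈ s.support, s i = m := (hφ.degree_eq_sum_deg_support hs).symm
  simp only [Pi.smul_apply, smul_eq_mul, mul_pow, Finset.prod_mul_distrib,
    Finset.prod_pow_eq_pow_sum, hdeg]
  ring

lemma IsHomogeneous.eval_rep_mk_eq_zero_iff {K σ : Type*} [Field K]
    {φ : MvPolynomial σ K} {m : ℕ} (hφ : φ.IsHomogeneous m) {v : σ → K} (hv : v ≠ 0) :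
    eval (Projectivization.mk K v hv).rep φ = 0 ↔ eval v φ = 0 := by
  obtain ⟨a, ha⟩ := Projectivization.exists_smul_eq_mk_rep K v hv
  rw [← ha, Units.smul_def, hφ.eval_smul, mul_eq_zero_iff_left (pow_ne_zero _ a.ne_zero)]

def singularLocus {K σ : Type*} [Field K] (f : MvPolynomial σ K) :
    Set (Projectivization K (σ → K)) :=
  {P | ∀ i, eval P.rep (pderiv i f) = 0}

end MvPolynomial

section Dehomogenization

variable {n : ℕ}

lemma deh_X_zero : deh n (X 0) = 1 := by simp [deh]

lemma deh_X_succ (j : Fin n) : deh n (X j.succ) = X j := by simp [deh]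

lemma deh_rename_succ (q : MvPolynomial (Fin n) ℂ) : deh n (rename Fin.succ q) = q := by
  rw [deh, aeval_rename]
  convert aeval_X_left_apply q
  ext1 j
  simp

lemma eval_deh (y : Fin n → ℂ) (P : MvPolynomial (Fin (n + 1)) ℂ) :
    eval y (deh n P) = eval (Fin.cons 1 y) P := by
  induction P using MvPolynomial.induction_on with
  | C a => simp [deh]
  | add p q hp hq => simp [hp, hq]
  | mul_X p i hp =>
    simp only [map_mul, hp]
    cases i using Fin.cases <;> simp [deh_X_zero, deh_X_succ]

lemma eval_pt (P : MvPolynomial (Fin (n + 1)) ℂ) :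
    eval (pt n) P = eval (0 : Fin n → ℂ) (deh n P) := by
  have hpt : pt n = Fin.cons 1 0 := by
    ext i
    cases i using Fin.cases <;> simp [pt, Fin.succ_ne_zero]
  rw [eval_deh, hpt]

lemma pderiv_deh (P : MvPolynomial (Fin (n + 1)) ℂ) (j : Fin n) :
    pderiv j (deh n P) = deh n (pderiv j.succ P) := by
  induction P using MvPolynomial.induction_on with
  | C a => simp [deh]
  | add p q hp hq => simp only [map_add, hp, hq]
  | mul_X p i hp =>
    simp only [map_mul, pderiv_mul, hp]
    cases i using Fin.cases with
    | zero => simp [deh_X_zero, pderiv_X_of_ne (Fin.succ_ne_zero j).symm]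
    | succ i =>
      classical
      simp [deh_X_succ, pderiv_X, Pi.single_apply, apply_ite (deh n)]

lemma deh_pderiv_zero {f : MvPolynomial (Fin (n + 1)) ℂ} {d : ℕ} (hf : f.IsHomogeneous d) :
    deh n (pderiv 0 f) = d * deh n f - ∑ j, X j * pderiv j (deh n f) := by
  have h := congr(deh n $(hf.sum_X_mul_pderiv))
  rw [map_sum, Fin.sum_univ_succ, map_nsmul] at h
  simp only [map_mul, deh_X_zero, deh_X_succ, one_mul, ← pderiv_deh, nsmul_eq_mul] at h
  exact eq_sub_of_add_eq h

lemma eq_zero_of_isHomogeneous_of_deh_eq_zero {P : MvPolynomial (Fin (n + 1)) ℂ} {m : ℕ}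
    (hP : P.IsHomogeneous m) (h : deh n P = 0) : P = 0 := by
  suffices X 0 * P = 0 from (mul_eq_zero.mp this).resolve_left (X_ne_zero 0)
  refine MvPolynomial.funext fun z => ?_
  by_cases hz : z 0 = 0
  · simp [hz]
  · have hz_eq : z = z 0 • Fin.cons 1 fun j => z j.succ / z 0 := by
      ext i
      cases i using Fin.cases <;> simp [mul_div_cancel₀ _ hz]
    rw [map_mul, hz_eq, hP.eval_smul, ← eval_deh, h]
    simp

/-- `x₀ ^ N · q(x₁/x₀, …, xₙ/x₀)` when `deg q ≤ N`. -/
def homogenize (N : ℕ) (q : MvPolynomial (Fin n) ℂ) : MvPolynomial (Fin (n + 1)) ℂ :=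
  ∑ k ∈ Finset.range (N + 1), X 0 ^ (N - k) * rename Fin.succ (homogeneousComponent k q)

lemma isHomogeneous_homogenize (N : ℕ) (q : MvPolynomial (Fin n) ℂ) :
    (homogenize N q).IsHomogeneous N := by
  refine IsHomogeneous.sum _ _ _ fun k hk => ?_
  have h := (isHomogeneous_X_pow (0 : Fin (n + 1)) (N - k)).mul
    ((homogeneousComponent_isHomogeneous k q).rename_isHomogeneous (f := Fin.succ))
  rwa [Nat.sub_add_cancel (Nat.lt_succ_iff.mp (Finset.mem_range.mp hk))] at h

lemma deh_homogenize {N : ℕ} {q : MvPolynomial (Fin n) ℂ} (hN : q.totalDegree ≤ N) :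
    deh n (homogenize N q) = q := by
  simp only [homogenize, map_sum, map_mul, map_pow, deh_X_zero, one_pow, one_mul, deh_rename_succ]
  rw [← Finset.sum_subset (Finset.range_subset_range.mpr (Nat.succ_le_succ hN))
    fun k _ hk => homogeneousComponent_eq_zero k q (by simp at hk; omega)]
  exact sum_homogeneousComponent q

def affineChart (n : ℕ) (y : Fin n → ℂ) : Projectivization ℂ (Fin (n + 1) → ℂ) :=
  Projectivization.mk ℂ (Fin.cons 1 y) fun h => one_ne_zero (congr_fun h 0)

lemma affineChart_injective : Function.Injective (affineChart n) := by
  intro y y' h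
  obtain ⟨a, ha⟩ := (Projectivization.mk_eq_mk_iff _ _ _ _ _).mp h
  have ha1 : (a : ℂ) = 1 := by simpa [Units.smul_def] using congr_fun ha 0
  ext j
  simpa [Units.smul_def, ha1] using (congr_fun ha j.succ).symm

lemma affineChart_mem_singularLocus {f : MvPolynomial (Fin (n + 1)) ℂ} {d : ℕ}
    (hf : f.IsHomogeneous d) {y : Fin n → ℂ} (hy : y ∈ zeroLocus ℂ (tjurinaIdeal (deh n f))) :
    affineChart n y ∈ singularLocus f := by
  rw [tjurinaIdeal, zeroLocus_span] at hy
  have hg : eval y (deh n f) = 0 := by simpa using hy _ (Set.mem_insert _ _)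
  have hgj (j : Fin n) : eval y (pderiv j (deh n f)) = 0 := by
    simpa using hy _ (Set.mem_insert_of_mem _ ⟨j, rfl⟩)
  intro i
  rw [affineChart, hf.pderiv.eval_rep_mk_eq_zero_iff, ← eval_deh]
  cases i using Fin.cases with
  | zero => simp [deh_pderiv_zero hf, hg, hgj]
  | succ j => rw [← pderiv_deh, hgj]

lemma finite_zeroLocus_tjurinaIdeal_deh {f : MvPolynomial (Fin (n + 1)) ℂ} {d : ℕ}
    (hf : f.IsHomogeneous d) (hiso : (singularLocus f).Finite) :
    (zeroLocus ℂ (tjurinaIdeal (deh n f))).Finite :=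
  (hiso.preimage affineChart_injective.injOn).subset fun _ hy =>
    affineChart_mem_singularLocus hf hy

lemma ne_zero_of_finite_singularLocus {f : MvPolynomial (Fin (n + 1)) ℂ} {d : ℕ} (hn : 0 < n)
    (hf : f.IsHomogeneous d) (hiso : (singularLocus f).Finite) : d ≠ 0 := by
  rintro rfl
  have hc : f = C (coeff 0 f) := totalDegree_eq_zero_iff_eq_C.mp (Nat.le_zero.mp hf.totalDegree_le)
  have : Nonempty (Fin n) := ⟨⟨0, hn⟩⟩
  refine Set.infinite_range_of_injective affineChart_injective (hiso.subset ?_)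
  rintro _ ⟨y, rfl⟩ i
  rw [hc, pderiv_C, map_zero]

lemma zero_mem_zeroLocus_tjurinaIdeal_deh {f : MvPolynomial (Fin (n + 1)) ℂ} {d : ℕ}
    (hf : f.IsHomogeneous d) (hd : d ≠ 0) (hsing : ∀ i, eval (pt n) (pderiv i f) = 0) :
    (0 : Fin n → ℂ) ∈ zeroLocus ℂ (tjurinaIdeal (deh n f)) := by
  rw [tjurinaIdeal, zeroLocus_span]
  rintro _ (rfl | ⟨j, rfl⟩)
  · have h := hsing 0
    rw [eval_pt, deh_pderiv_zero hf] at h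
    simpa [hd] using h
  · show eval 0 (pderiv j (deh n f)) = 0
    rw [pderiv_deh, ← eval_pt]
    exact hsing j.succ

theorem exists_syzygy_of_saitoQH {f : MvPolynomial (Fin (n + 1)) ℂ} {d : ℕ}
    (hf : f.IsHomogeneous d) (hd : d ≠ 0) (hs : SaitoQH (deh n f)) :
    ∃ A : Fin (n + 1) → MvPolynomial (Fin (n + 1)) ℂ,
      (∑ i, A i * pderiv i f = 0) ∧ eval (pt n) (A 0) ≠ 0 := by
  obtain ⟨u, hu0, hu⟩ := hs
  obtain ⟨b, hb⟩ := Ideal.mem_span_range_iff_exists_fun.mp hu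
  set N := max u.totalDegree (Finset.univ.sup fun j => (b j).totalDegree)
  set U := homogenize N u
  set B := fun j => homogenize (N + 1) (b j)
  have hU : deh n U = u := deh_homogenize (le_max_left _ _)
  have hB (j : Fin n) : deh n (B j) = b j :=
    deh_homogenize ((Finset.le_sup (f := fun j => (b j).totalDegree) (Finset.mem_univ j)).trans
      ((le_max_right _ _).trans N.le_succ))
  have hUB : U * f = ∑ j, B j * pderiv j.succ f := by
    refine sub_eq_zero.mp (eq_zero_of_isHomogeneous_of_deh_eq_zero (m := N + d) ?_ ?_)
    · refine ((isHomogeneous_homogenize N u).mul hf).sub (IsHomogeneous.sum _ _ _ fun j _ => ?_)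
      have h := (isHomogeneous_homogenize (N + 1) (b j)).mul (hf.pderiv (i := j.succ))
      rwa [show N + 1 + (d - 1) = N + d by omega] at h
    · simp only [map_sub, map_mul, map_sum, hU, hB, ← pderiv_deh, hb, sub_self]
  refine ⟨Fin.cons (U * X 0) fun j => U * X j.succ - (d : MvPolynomial _ ℂ) * B j, ?_, ?_⟩
  · have heuler := hf.sum_X_mul_pderiv
    rw [Fin.sum_univ_succ, nsmul_eq_mul] at heuler
    simp only [Fin.sum_univ_succ, Fin.cons_zero, Fin.cons_succ, sub_mul,
      Finset.sum_sub_distrib, mul_assoc, ← Finset.mul_sum, ← hUB]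
    linear_combination U * heuler
  · rwa [Fin.cons_zero, eval_pt, map_mul, hU, deh_X_zero, mul_one]

lemma vectorField_deh_eq {f : MvPolynomial (Fin (n + 1)) ℂ} {d : ℕ} (hf : f.IsHomogeneous d)
    {A : Fin (n + 1) → MvPolynomial (Fin (n + 1)) ℂ} (hA : ∑ i, A i * pderiv i f = 0) :
    vectorField (fun j => deh n (A 0) * X j - deh n (A j.succ)) (deh n f) =
      (d * deh n (A 0)) * deh n f := by
  have h := congr(deh n $hA)
  rw [map_sum, Fin.sum_univ_succ, map_zero] at h
  simp only [map_mul, deh_pderiv_zero hf, ← pderiv_deh] at h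
  simp only [vectorField_apply, sub_mul, Finset.sum_sub_distrib, mul_assoc, ← Finset.mul_sum]
  linear_combination -h

theorem saitoQH_of_syzygy {f : MvPolynomial (Fin (n + 1)) ℂ} {d : ℕ} (hf : f.IsHomogeneous d)
    (hd : d ≠ 0) {A : Fin (n + 1) → MvPolynomial (Fin (n + 1)) ℂ}
    (hA : ∑ i, A i * pderiv i f = 0) (h0 : eval (pt n) (A 0) ≠ 0) : SaitoQH (deh n f) := by
  refine ⟨d * deh n (A 0), by simpa [eval_pt, hd] using h0, ?_⟩
  rw [← vectorField_deh_eq hf hA, vectorField_apply]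
  exact Ideal.sum_mem _ fun j _ => Ideal.mul_mem_left _ _ (Ideal.subset_span ⟨j, rfl⟩)

theorem eval_pt_syzygy_succ_eq_zero {f : MvPolynomial (Fin (n + 1)) ℂ} {d : ℕ}
    (hf : f.IsHomogeneous d) (hd : d ≠ 0) (hiso : (singularLocus f).Finite)
    (hsing : ∀ i, eval (pt n) (pderiv i f) = 0)
    {A : Fin (n + 1) → MvPolynomial (Fin (n + 1)) ℂ} (hA : ∑ i, A i * pderiv i f = 0)
    (j : Fin n) : eval (pt n) (A j.succ) = 0 := by
  have h := eval_derivation_X_eq_zero_of_finite_zeroLocus _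
    (fun _ ha => vectorField_mem_tjurinaIdeal (vectorField_deh_eq hf hA) ha)
    (finite_zeroLocus_tjurinaIdeal_deh hf hiso) (zero_mem_zeroLocus_tjurinaIdeal_deh hf hd hsing) j
  simpa [vectorField_X, eval_pt] using h

end Dehomogenization

/-- Theorem 3.1: for a hypersurface `V(f) ⊆ ℙⁿ` with only isolated singularities and singular
point `p = (1:0:⋯:0)`, the singularity at `p` is quasi-homogeneous (Saito's condition for the
dehomogenization `g = f(1,y)`) iff some Jacobian syzygy of `f` has a component not vanishing
at `p`. -/
theorem stmt_0 (n d : ℕ) (hn : 2 ≤ n) (f : MvPolynomial (Fin (n + 1)) ℂ)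
    (hf : f.IsHomogeneous d)
    (hiso : {P : Projectivization ℂ (Fin (n + 1) → ℂ) |
      ∀ i, eval P.rep (pderiv i f) = 0}.Finite)
    (hsing : ∀ i, eval (pt n) (pderiv i f) = 0) :
    SaitoQH (deh n f) ↔
      ∃ A : Fin (n + 1) → MvPolynomial (Fin (n + 1)) ℂ,
        (∑ i, A i * pderiv i f = 0) ∧ ∃ k, eval (pt n) (A k) ≠ 0 := by
  have hd : d ≠ 0 := ne_zero_of_finite_singularLocus (by omega) hf hiso
  constructor
  · intro hs
    obtain ⟨A, hA, h0⟩ := exists_syzygy_of_saitoQH hf hd hs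
    exact ⟨A, hA, 0, h0⟩
  · rintro ⟨A, hA, k, hk⟩
    cases k using Fin.cases with
    | zero => exact saitoQH_of_syzygy hf hd hA hk
    | succ j => exact absurd (eval_pt_syzygy_succ_eq_zero hf hd hiso hsing hA j) hk
end
end

section
/- Let n ≥ 2 and let f ∈ ℂ[x₀,…,xₙ] be homogeneous of degree d ≥ 2 such that V = V(f) ⊆ ℙⁿ has only isolated singularities. Assume every singular point of V is quasi-homogeneous, rendered as: for every q ∈ ℂ^{n+1} ∖ {0} with ∂₀f(q) = ⋯ = ∂ₙf(q) = 0 there exists a Jacobian syzygy ρ ∈ Syz(J_f) with ρ(q) ≠ 0 (as a vector in ℂ^{n+1}). Let ρ₁,…,ρ_m be homogeneous generators of the R-module Syz(J_f), of degrees d₁ ≤ ⋯ ≤ d_m. Then for every countable subset Y ⊆ ℂ^{n+1} ∖ {0} there exists a homogeneous Jacobian syzygy ρ ∈ Syz(J_f) of degree d_m such that ρ(y) ≠ 0 for every y ∈ Y. -/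
open MvPolynomial

noncomputable section

/-!
At a point `y ≠ 0` where some partial `∂ᵢf` does not vanish, a Koszul syzygy
`∂ᵢf·eⱼ - ∂ⱼf·eᵢ` is nonzero at `y`; at a singular point, quasi-homogeneity provides one.
Writing that syzygy in the generators, some generator `ρⱼ` is nonzero at `y`, and so is
`x_k^(d_m - d_j) ρⱼ` for any coordinate with `y_k ≠ 0`. These padded generators span a
finite-dimensional space of syzygies of degree `d_m`; for each `y ∈ Y` those vanishing at
`y` form a proper subspace, and by Baire's theorem countably many proper subspaces of a
finite-dimensional complex space cannot cover it.
-/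

theorem exists_forall_apply_ne_zero_of_countable {ι 𝕜 E F : Type*} [Countable ι]
    [NontriviallyNormedField 𝕜] [CompleteSpace 𝕜] [NormedAddCommGroup E] [NormedSpace 𝕜 E]
    [FiniteDimensional 𝕜 E] [AddCommGroup F] [Module 𝕜 F]
    (L : ι → E →ₗ[𝕜] F) (hL : ∀ i, L i ≠ 0) : ∃ x, ∀ i, L i x ≠ 0 := by
  have := FiniteDimensional.complete 𝕜 E
  have hdense : ∀ i, Dense ((LinearMap.ker (L i) : Set E)ᶜ) := fun i => by
    rw [← interior_eq_empty_iff_dense_compl, ← Set.not_nonempty_iff_eq_empty]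
    exact fun h => hL i (LinearMap.ker_eq_top.mp
      ((LinearMap.ker (L i)).eq_top_of_nonempty_interior' h))
  obtain ⟨x, hx⟩ := (dense_iInter_of_isOpen
    (fun i => (LinearMap.ker (L i)).closed_of_finiteDimensional.isOpen_compl) hdense).nonempty
  exact ⟨x, by simpa using hx⟩

theorem Fintype.linearCombination_single_sub_single {α R : Type*} [Fintype α] [DecidableEq α]
    [CommRing R] (g : α → R) (i j : α) :
    Fintype.linearCombination R g (Pi.single i (g j) - Pi.single j (g i)) = 0 := by
  simp [Fintype.linearCombination_apply_single, mul_comm]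

section JacobianSyzygy

variable {σ K : Type*} [CommRing K]

def jacobianSyz [Fintype σ] (f : MvPolynomial σ K) :
    Submodule (MvPolynomial σ K) (σ → MvPolynomial σ K) :=
  LinearMap.ker (Fintype.linearCombination (MvPolynomial σ K) fun i => pderiv i f)

theorem mem_jacobianSyz [Fintype σ] {f : MvPolynomial σ K} {A : σ → MvPolynomial σ K} :
    A ∈ jacobianSyz f ↔ ∑ i, A i * pderiv i f = 0 := by
  simp [jacobianSyz, Fintype.linearCombination_apply]

theorem exists_mem_jacobianSyz_eval_ne_zero [Fintype σ] [Nontrivial σ] {f : MvPolynomial σ K}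
    {y : σ → K}
    (hsing : (∀ i, eval y (pderiv i f) = 0) →
      ∃ A ∈ jacobianSyz f, ∃ k, eval y (A k) ≠ 0) :
    ∃ A ∈ jacobianSyz f, ∃ k, eval y (A k) ≠ 0 := by
  classical
  by_cases hy : ∀ i, eval y (pderiv i f) = 0
  · exact hsing hy
  obtain ⟨i, hi⟩ := not_forall.mp hy
  obtain ⟨j, hji⟩ := exists_ne i
  refine ⟨Pi.single j (pderiv i f) - Pi.single i (pderiv j f), ?_, j, ?_⟩
  · exact LinearMap.mem_ker.mpr
      (Fintype.linearCombination_single_sub_single (fun i => pderiv i f) j i)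
  · rwa [Pi.sub_apply, Pi.single_eq_same, Pi.single_eq_of_ne hji, sub_zero]

theorem exists_eval_ne_zero_of_mem_span {ι : Type*} {ρ : ι → σ → MvPolynomial σ K}
    {A : σ → MvPolynomial σ K} (hA : A ∈ Submodule.span (MvPolynomial σ K) (Set.range ρ))
    {y : σ → K} {k : σ} (hk : eval y (A k) ≠ 0) : ∃ j i, eval y (ρ j i) ≠ 0 := by
  contrapose! hk
  induction hA using Submodule.span_induction with
  | mem x hx => obtain ⟨j, rfl⟩ := hx; exact hk j k
  | zero => simp
  | add x x' _ _ hx hx' => simp [hx, hx']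
  | smul r x _ hx => simp [hx]

end JacobianSyzygy

section PadToDegree

variable {ι σ K : Type*} [CommRing K]

def padToDegree (ρ : ι → σ → MvPolynomial σ K) (dd : ι → ℕ) (e : ℕ) (p : ι × σ) :
    σ → MvPolynomial σ K :=
  (X p.2 : MvPolynomial σ K) ^ (e - dd p.1) • ρ p.1

theorem padToDegree_mem_jacobianSyz [Fintype σ] {f : MvPolynomial σ K}
    {ρ : ι → σ → MvPolynomial σ K} (hsyz : ∀ j, ρ j ∈ jacobianSyz f) (dd : ι → ℕ) (e : ℕ)
    (p : ι × σ) : padToDegree ρ dd e p ∈ jacobianSyz f :=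
  Submodule.smul_mem _ _ (hsyz p.1)

theorem isHomogeneous_padToDegree {ρ : ι → σ → MvPolynomial σ K} {dd : ι → ℕ}
    (hhom : ∀ j i, (ρ j i).IsHomogeneous (dd j)) {e : ℕ} {p : ι × σ} (hle : dd p.1 ≤ e)
    (i : σ) : (padToDegree ρ dd e p i).IsHomogeneous e := by
  simpa [padToDegree, Nat.sub_add_cancel hle] using
    (isHomogeneous_X_pow p.2 (e - dd p.1)).mul (hhom p.1 i)

theorem exists_eval_padToDegree_ne_zero [IsDomain K] {ρ : ι → σ → MvPolynomial σ K}
    (dd : ι → ℕ) (e : ℕ) {y : σ → K} (hy : y ≠ 0) {j : ι} {i : σ}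
    (hji : eval y (ρ j i) ≠ 0) :
    ∃ p i, eval y (padToDegree ρ dd e p i) ≠ 0 := by
  obtain ⟨k, hk⟩ := Function.ne_iff.mp hy
  refine ⟨(j, k), i, ?_⟩
  simp only [padToDegree, Pi.smul_apply, smul_eq_mul, map_mul, map_pow, eval_X]
  exact mul_ne_zero (pow_ne_zero _ hk) hji

end PadToDegree

theorem exists_sum_C_smul_forall_eval_ne_zero {ι σ 𝕜 : Type*} [Fintype ι] [Fintype σ]
    [NontriviallyNormedField 𝕜] [CompleteSpace 𝕜] (B : ι → σ → MvPolynomial σ 𝕜)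
    {Y : Set (σ → 𝕜)} (hY : Y.Countable) (hB : ∀ y ∈ Y, ∃ p i, eval y (B p i) ≠ 0) :
    ∃ c : ι → 𝕜, ∀ y ∈ Y, ∃ i, eval y ((∑ p, C (σ := σ) (c p) • B p) i) ≠ 0 := by
  classical
  have := hY.to_subtype
  let L : Y → (ι → 𝕜) →ₗ[𝕜] σ → 𝕜 := fun y =>
    LinearMap.pi fun i => Fintype.linearCombination 𝕜 fun p => eval y.1 (B p i)
  have hL : ∀ y, L y ≠ 0 := fun y hy => by
    obtain ⟨p, i, hpi⟩ := hB y.1 y.2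
    have h := congr_fun (LinearMap.congr_fun hy (Pi.single p 1)) i
    exact hpi (by simpa [L, Fintype.linearCombination_apply_single] using h)
  obtain ⟨c, hc⟩ := exists_forall_apply_ne_zero_of_countable L hL
  refine ⟨c, fun y hy => ?_⟩
  obtain ⟨i, hi⟩ := Function.ne_iff.mp (hc ⟨y, hy⟩)
  exact ⟨i, by simpa [L, Fintype.linearCombination_apply, Finset.sum_apply] using hi⟩

theorem stmt_11_general (n m : ℕ) (hn : 2 ≤ n)
    (f : MvPolynomial (Fin (n + 1)) ℂ)
    (hQH : ∀ q : Fin (n + 1) → ℂ, q ≠ 0 → (∀ i, eval q (pderiv i f) = 0) →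
      ∃ A : Fin (n + 1) → MvPolynomial (Fin (n + 1)) ℂ,
        (∑ i, A i * pderiv i f = 0) ∧ ∃ k, eval q (A k) ≠ 0)
    (ρ : Fin (m + 1) → Fin (n + 1) → MvPolynomial (Fin (n + 1)) ℂ)
    (dd : Fin (m + 1) → ℕ) (hmono : Monotone dd)
    (hhom : ∀ j i, (ρ j i).IsHomogeneous (dd j))
    (hsyz : ∀ j, ∑ i, ρ j i * pderiv i f = 0)
    (hgen : ∀ A : Fin (n + 1) → MvPolynomial (Fin (n + 1)) ℂ,
      (∑ i, A i * pderiv i f = 0) →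
        A ∈ Submodule.span (MvPolynomial (Fin (n + 1)) ℂ) (Set.range ρ))
    (Y : Set (Fin (n + 1) → ℂ)) (hY : Y.Countable) (hY0 : ∀ y ∈ Y, y ≠ 0) :
    ∃ A : Fin (n + 1) → MvPolynomial (Fin (n + 1)) ℂ,
      (∑ i, A i * pderiv i f = 0) ∧
      (∀ i, (A i).IsHomogeneous (dd (Fin.last m))) ∧
      ∀ y ∈ Y, ∃ i, eval y (A i) ≠ 0 := by
  have : Nontrivial (Fin (n + 1)) := Fin.nontrivial_iff_two_le.mpr (by omega)
  set B := padToDegree ρ dd (dd (Fin.last m))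
  have hB : ∀ y ∈ Y, ∃ p i, eval y (B p i) ≠ 0 := by
    intro y hy
    obtain ⟨A, hA, k, hk⟩ := exists_mem_jacobianSyz_eval_ne_zero (f := f) fun hsing => by
      simpa only [mem_jacobianSyz, exists_prop] using hQH y (hY0 y hy) hsing
    obtain ⟨j, i, hji⟩ :=
      exists_eval_ne_zero_of_mem_span (hgen A (mem_jacobianSyz.mp hA)) hk
    exact exists_eval_padToDegree_ne_zero dd _ (hY0 y hy) hji
  obtain ⟨c, hc⟩ := exists_sum_C_smul_forall_eval_ne_zero B hY hB
  refine ⟨∑ p, C (c p) • B p, mem_jacobianSyz.mp ?_, fun i => ?_, hc⟩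
  · exact Submodule.sum_mem _ fun p _ => Submodule.smul_mem _ _
      (padToDegree_mem_jacobianSyz (fun j => mem_jacobianSyz.mpr (hsyz j)) dd _ p)
  · simp only [Finset.sum_apply, Pi.smul_apply, smul_eq_mul]
    exact IsHomogeneous.sum _ _ _ fun p _ =>
      (isHomogeneous_padToDegree hhom (hmono (Fin.le_last _)) i).C_mul _

/-- Proposition 3.6: let `V(f) ⊆ ℙⁿ` have only isolated singularities, all of them
quasi-homogeneous (rendered via Theorem 3.1: at every nonzero common zero `q` of the partials
there is a Jacobian syzygy not vanishing at `q`). Let `ρ₀,…,ρ_m` be homogeneous generators of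
`Syz(J_f)` of degrees `d₀ ≤ ⋯ ≤ d_m`. Then for every countable set `Y ⊆ ℂ^{n+1} ∖ {0}` there
is a homogeneous Jacobian syzygy of degree `d_m` that is nonzero at every point of `Y`. -/
theorem stmt_11 (n d m : ℕ) (hn : 2 ≤ n) (hd : 2 ≤ d)
    (f : MvPolynomial (Fin (n + 1)) ℂ) (hf : f.IsHomogeneous d)
    (hiso : {P : Projectivization ℂ (Fin (n + 1) → ℂ) |
      ∀ i, eval P.rep (pderiv i f) = 0}.Finite)
    (hQH : ∀ q : Fin (n + 1) → ℂ, q ≠ 0 → (∀ i, eval q (pderiv i f) = 0) →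
      ∃ A : Fin (n + 1) → MvPolynomial (Fin (n + 1)) ℂ,
        (∑ i, A i * pderiv i f = 0) ∧ ∃ k, eval q (A k) ≠ 0)
    (ρ : Fin (m + 1) → Fin (n + 1) → MvPolynomial (Fin (n + 1)) ℂ)
    (dd : Fin (m + 1) → ℕ) (hmono : Monotone dd)
    (hhom : ∀ j i, (ρ j i).IsHomogeneous (dd j))
    (hsyz : ∀ j, ∑ i, ρ j i * pderiv i f = 0)
    (hgen : ∀ A : Fin (n + 1) → MvPolynomial (Fin (n + 1)) ℂ,
      (∑ i, A i * pderiv i f = 0) →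
        A ∈ Submodule.span (MvPolynomial (Fin (n + 1)) ℂ) (Set.range ρ))
    (Y : Set (Fin (n + 1) → ℂ)) (hY : Y.Countable) (hY0 : ∀ y ∈ Y, y ≠ 0) :
    ∃ A : Fin (n + 1) → MvPolynomial (Fin (n + 1)) ℂ,
      (∑ i, A i * pderiv i f = 0) ∧
      (∀ i, (A i).IsHomogeneous (dd (Fin.last m))) ∧
      ∀ y ∈ Y, ∃ i, eval y (A i) ≠ 0 :=
  stmt_11_general n m hn f hQH ρ dd hmono hhom hsyz hgen Y hY hY0
end
end
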